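/- arXiv:2509.01358 — 2 statements merged into one kernel-verified Lean document; each statement's English description precedes it below -/
import Mathlib

section
/- In the two-player binary-action example game, let r = (−173 + √34889)/80. The (non-monotone) strategy profile g_1*(t_1) = 2 for t_1 ∈ [0, 1/5] and g_1*(t_1) = 1 for t_1 ∈ (1/5, 1], and g_2*(t_2) = 2 for t_2 ∈ [0, r] and g_2*(t_2) = 1 for t_2 ∈ (r, 1], is a perfect equilibrium. -/
/-!
Statement 14 (Claim 1, part 3): in the two-player binary-action example game, the
(non-monotone) cutoff profile with cutoffs 1/5 and r = (-173 + sqrt 34889)/80 is a perfect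
equilibrium.
-/

open MeasureTheory Filter Metric

namespace MonotonePerfection

noncomputable section

/-- The binary action space `{1, 2}` of the example game. -/
abbrev Act12 : Type := {a : ℕ // a = 1 ∨ a = 2}

/-- The type space `[0,1]` of the example game. -/
abbrev T01 : Type := ↥(Set.Icc (0:ℝ) 1)

/-- Lebesgue (= uniform) measure on `[0,1]`. -/
noncomputable def μ01 : Measure T01 := (volume : Measure ℝ).comap Subtype.val

/-- Player 1's payoff in the example game (first action is player 1's). -/
noncomputable def u1 (a1 a2 : Act12) (t1 t2 : ℝ) : ℝ :=
  if a1.1 = 1 then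
    (if a2.1 = 1 then 5/2 - 4/3 * t1 else 1/2 + 1/2 * t2)
  else
    (if a2.1 = 1 then 55/24 - t2/6 - 7/6 * t1 else 2 + t2 - 7/6 * t1)

/-- Player 2's payoff in the example game, depending only on the actions. -/
noncomputable def u2 (a1 a2 : Act12) : ℝ :=
  if a1.1 = 1 then (if a2.1 = 1 then -1 else 1)
  else (if a2.1 = 1 then 7 else -1)

/-- Player 1's interim payoff against a pure strategy of player 2 (types are independent
and uniform on `[0,1]`). -/
noncomputable def V1p (a : Act12) (t1 : T01) (s2 : T01 → Act12) : ℝ :=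
  ∫ t2 : T01, u1 a (s2 t2) (t1 : ℝ) (t2 : ℝ) ∂μ01

/-- Player 2's interim payoff against a pure strategy of player 1. -/
noncomputable def V2p (a : Act12) (t2 : T01) (s1 : T01 → Act12) : ℝ :=
  ∫ t1 : T01, u2 (s1 t1) a ∂μ01

/-- The Prohorov distance between two Borel measures. -/
noncomputable def prohorovDist {Ω : Type*} [MeasurableSpace Ω] [PseudoMetricSpace Ω]
    (μ ν : Measure Ω) : ℝ :=
  sInf {ε : ℝ |
    ∀ B : Set Ω, MeasurableSet B →
      μ B ≤ ν (Metric.thickening ε B) + ENNReal.ofReal ε ∧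
      ν B ≤ μ (Metric.thickening ε B) + ENNReal.ofReal ε}

/-- A mixed strategy in the example game. -/
def IsMixed (g : T01 → Measure Act12) : Prop :=
  (∀ t, IsProbabilityMeasure (g t)) ∧
  ∀ B : Set Act12, MeasurableSet B → Measurable fun t => g t B

/-- A completely mixed strategy: both actions get positive probability at every type. -/
def IsCompletelyMixed (g : T01 → Measure Act12) : Prop :=
  ∀ (t : T01) (a : Act12), 0 < g t {a}

/-- Player 1's interim payoff against a mixed strategy of player 2. -/
noncomputable def V1 (a : Act12) (t1 : T01) (g2 : T01 → Measure Act12) : ℝ :=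
  ∫ t2 : T01, ∫ a2, u1 a a2 (t1 : ℝ) (t2 : ℝ) ∂(g2 t2) ∂μ01

/-- Player 2's interim payoff against a mixed strategy of player 1. -/
noncomputable def V2 (a : Act12) (t2 : T01) (g1 : T01 → Measure Act12) : ℝ :=
  ∫ t1 : T01, ∫ a1, u2 a1 a ∂(g1 t1) ∂μ01

/-- Player 1's best responses. -/
def BR1 (t1 : T01) (g2 : T01 → Measure Act12) : Set Act12 :=
  {a | ∀ a', V1 a' t1 g2 ≤ V1 a t1 g2}

/-- Player 2's best responses. -/
def BR2 (t2 : T01) (g1 : T01 → Measure Act12) : Set Act12 :=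
  {a | ∀ a', V2 a' t2 g1 ≤ V2 a t2 g1}

/-- Bayesian Nash equilibrium of the example game. -/
def IsBNE12 (s1 s2 : T01 → Act12) : Prop :=
  (∀ᵐ t1 ∂μ01, s1 t1 ∈ BR1 t1 fun t => Measure.dirac (s2 t)) ∧
  (∀ᵐ t2 ∂μ01, s2 t2 ∈ BR2 t2 fun t => Measure.dirac (s1 t))

/-- A perfect strategy profile of the example game. -/
def IsPerfect12 (s1 s2 : T01 → Act12) : Prop :=
  ∃ G1 G2 : ℕ → T01 → Measure Act12,
    (∀ k, IsMixed (G1 k) ∧ IsMixed (G2 k) ∧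
      IsCompletelyMixed (G1 k) ∧ IsCompletelyMixed (G2 k)) ∧
    (∀ᵐ t1 ∂μ01,
      Filter.Tendsto (fun k => prohorovDist (G1 k t1) (Measure.dirac (s1 t1)))
        Filter.atTop (nhds 0) ∧
      Filter.Tendsto (fun k => Metric.infDist (s1 t1) (BR1 t1 (G2 k)))
        Filter.atTop (nhds 0)) ∧
    (∀ᵐ t2 ∂μ01,
      Filter.Tendsto (fun k => prohorovDist (G2 k t2) (Measure.dirac (s2 t2)))
        Filter.atTop (nhds 0) ∧
      Filter.Tendsto (fun k => Metric.infDist (s2 t2) (BR2 t2 (G1 k)))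
        Filter.atTop (nhds 0))

/-- The constant r of the example. -/
noncomputable def rconst : ℝ := (-173 + Real.sqrt 34889) / 80

/-- Player 1's strategy: action 2 on [0, 1/5], action 1 on (1/5, 1]. -/
noncomputable def g1star (t : T01) : Act12 :=
  if (t : ℝ) ≤ 1/5 then ⟨2, Or.inr rfl⟩ else ⟨1, Or.inl rfl⟩

/-- Player 2's strategy: action 2 on [0, r], action 1 on (r, 1]. -/
noncomputable def g2star (t : T01) : Act12 :=
  if (t : ℝ) ≤ rconst then ⟨2, Or.inr rfl⟩ else ⟨1, Or.inl rfl⟩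

section Aux
open scoped ENNReal

open intervalIntegral in
lemma integral_Ioc_affine (a b α β : ℝ) (hab : a ≤ b) :
    ∫ t in Set.Ioc a b, (α + β * t) = α*(b-a) + β*(b^2-a^2)/2 := by
  rw [← intervalIntegral.integral_of_le hab,
    integral_add intervalIntegrable_const (intervalIntegrable_id.const_mul β),
    intervalIntegral.integral_const, intervalIntegral.integral_const_mul, integral_id, smul_eq_mul]
  ring

/-- The two actions. -/
def aOne : Act12 := ⟨1, Or.inl rfl⟩
def aTwo : Act12 := ⟨2, Or.inr rfl⟩

lemma act_cases (a : Act12) : a = aOne ∨ a = aTwo := by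
  rcases a with ⟨a, rfl | rfl⟩
  · exact Or.inl rfl
  · exact Or.inr rfl

lemma aOne_ne_aTwo : aOne ≠ aTwo := by
  simp [aOne, aTwo]

instance : Finite Act12 := Set.Finite.to_subtype (Set.toFinite ({1,2} : Set ℕ))

/-- The two-point mixture `p ⬝ δ₂ + (1-p) ⬝ δ₁`. -/
noncomputable def mix (p : ℝ) : Measure Act12 :=
  ENNReal.ofReal p • Measure.dirac aTwo + ENNReal.ofReal (1-p) • Measure.dirac aOne

lemma finite_smul_dirac (c : ℝ) (a : Act12) :
    IsFiniteMeasure (ENNReal.ofReal c • Measure.dirac a) :=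
  ⟨by simp [lt_top_iff_ne_top]⟩

lemma mix_one : mix 1 = Measure.dirac aTwo := by
  simp [mix]

lemma mix_zero : mix 0 = Measure.dirac aOne := by
  simp [mix]

lemma mix_apply (p : ℝ) (B : Set Act12) :
    mix p B = ENNReal.ofReal p * Measure.dirac aTwo B
      + ENNReal.ofReal (1-p) * Measure.dirac aOne B := by
  simp [mix]

lemma isProbabilityMeasure_mix (p : ℝ) (h0 : 0 ≤ p) (h1 : p ≤ 1) :
    IsProbabilityMeasure (mix p) := by
  constructor
  rw [mix_apply]
  simp only [measure_univ, mul_one]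
  rw [← ENNReal.ofReal_add h0 (by linarith)]
  norm_num

lemma integral_mix (p : ℝ) (hp : 0 ≤ p) (hp1 : p ≤ 1) (f : Act12 → ℝ) :
    ∫ a, f a ∂(mix p) = p * f aTwo + (1 - p) * f aOne := by
  have h1 := finite_smul_dirac p aTwo
  have h2 := finite_smul_dirac (1-p) aOne
  unfold mix
  rw [integral_add_measure .of_finite .of_finite,
    integral_smul_measure, integral_smul_measure, integral_dirac, integral_dirac,
    ENNReal.toReal_ofReal hp, ENNReal.toReal_ofReal (by linarith)]
  simp [smul_eq_mul]

lemma integral_mu01 (f : ℝ → ℝ) :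
    ∫ t : T01, f (t:ℝ) ∂μ01 = ∫ t in Set.Icc (0:ℝ) 1, f t := by
  rw [μ01, integral_subtype_comap measurableSet_Icc]

lemma integral_mu01_ite (c P Q R S : ℝ) (hc0 : 0 ≤ c) (hc1 : c ≤ 1) :
    ∫ t : T01, (if (t:ℝ) ≤ c then P + Q * (t:ℝ) else R + S * (t:ℝ)) ∂μ01
      = (P*c + Q*c^2/2) + (R*(1-c) + S*(1-c^2)/2) := by
  rw [integral_mu01 (fun s => if s ≤ c then P + Q * s else R + S * s),
    MeasureTheory.integral_Icc_eq_integral_Ioc, ← Set.Ioc_union_Ioc_eq_Ioc hc0 hc1,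
    MeasureTheory.setIntegral_union (Set.Ioc_disjoint_Ioc_of_le le_rfl) measurableSet_Ioc]
  · rw [MeasureTheory.setIntegral_congr_fun measurableSet_Ioc
        (g := fun t => P + Q * t) (fun t ht => if_pos ht.2),
      MeasureTheory.setIntegral_congr_fun measurableSet_Ioc
        (g := fun t => R + S * t) (fun t ht => if_neg (not_le.2 ht.1)),
      integral_Ioc_affine _ _ _ _ hc0, integral_Ioc_affine _ _ _ _ hc1]
    ring
  · apply MeasureTheory.IntegrableOn.congr_fun ?_ (fun t ht => (if_pos ht.2).symm) measurableSet_Ioc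
    exact (continuous_const.add (continuous_const.mul continuous_id)).integrableOn_Ioc
  · apply MeasureTheory.IntegrableOn.congr_fun ?_
      (fun t ht => (if_neg (not_le.2 ht.1)).symm) measurableSet_Ioc
    exact (continuous_const.add (continuous_const.mul continuous_id)).integrableOn_Ioc

/-- The cutoff mixed strategy: probability of action 2 equals `x` below the cutoff `c`
and `y` above it. -/
noncomputable def strat (c x y : ℝ) : T01 → Measure Act12 :=
  fun t => mix (if (t:ℝ) ≤ c then x else y)

lemma V1_one_strat (t1 : T01) (c x y : ℝ) (hc0 : 0 ≤ c) (hc1 : c ≤ 1)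
    (hx0 : 0 ≤ x) (hx1 : x ≤ 1) (hy0 : 0 ≤ y) (hy1 : y ≤ 1) :
    V1 aOne t1 (strat c x y)
      = (c*x+(1-c)*y + (x*c^2/2 + y*(1-c^2)/2))/2
        + (1-(c*x+(1-c)*y))*(5/2 - 4/3*(t1:ℝ)) := by
  have key : ∀ t2 : T01, (∫ a2, u1 aOne a2 (t1:ℝ) (t2:ℝ) ∂(strat c x y t2))
      = (if (t2:ℝ) ≤ c then (x*(1/2) + (1-x)*(5/2 - 4/3*(t1:ℝ))) + (x*(1/2)) * (t2:ℝ)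
          else (y*(1/2) + (1-y)*(5/2 - 4/3*(t1:ℝ))) + (y*(1/2)) * (t2:ℝ)) := by
    intro t2
    unfold strat
    by_cases h : (t2:ℝ) ≤ c
    · rw [if_pos h, if_pos h, integral_mix x hx0 hx1]
      norm_num [u1, aOne, aTwo]; ring
    · rw [if_neg h, if_neg h, integral_mix y hy0 hy1]
      norm_num [u1, aOne, aTwo]; ring
  calc V1 aOne t1 (strat c x y)
      = ∫ t2 : T01, (if (t2:ℝ) ≤ c then (x*(1/2) + (1-x)*(5/2 - 4/3*(t1:ℝ))) + (x*(1/2)) * (t2:ℝ)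
          else (y*(1/2) + (1-y)*(5/2 - 4/3*(t1:ℝ))) + (y*(1/2)) * (t2:ℝ)) ∂μ01 := by
        unfold V1; exact integral_congr_ae (Filter.Eventually.of_forall key)
    _ = _ := by
        rw [integral_mu01_ite _ _ _ _ _ hc0 hc1]; ring

lemma V1_two_strat (t1 : T01) (c x y : ℝ) (hc0 : 0 ≤ c) (hc1 : c ≤ 1)
    (hx0 : 0 ≤ x) (hx1 : x ≤ 1) (hy0 : 0 ≤ y) (hy1 : y ≤ 1) :
    V1 aTwo t1 (strat c x y)
      = 2*(c*x+(1-c)*y) + (x*c^2/2 + y*(1-c^2)/2) + (1-(c*x+(1-c)*y))*(55/24)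
        - 1/12 + (x*c^2/2 + y*(1-c^2)/2)/6 - 7/6*(t1:ℝ) := by
  have key : ∀ t2 : T01, (∫ a2, u1 aTwo a2 (t1:ℝ) (t2:ℝ) ∂(strat c x y t2))
      = (if (t2:ℝ) ≤ c then (x*2 + (1-x)*(55/24) - 7/6*(t1:ℝ)) + (x - (1-x)/6) * (t2:ℝ)
          else (y*2 + (1-y)*(55/24) - 7/6*(t1:ℝ)) + (y - (1-y)/6) * (t2:ℝ)) := by
    intro t2
    unfold strat
    by_cases h : (t2:ℝ) ≤ c
    · rw [if_pos h, if_pos h, integral_mix x hx0 hx1]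
      norm_num [u1, aOne, aTwo]; ring
    · rw [if_neg h, if_neg h, integral_mix y hy0 hy1]
      norm_num [u1, aOne, aTwo]; ring
  calc V1 aTwo t1 (strat c x y)
      = ∫ t2 : T01, (if (t2:ℝ) ≤ c then ((x*2 + (1-x)*(55/24) - 7/6*(t1:ℝ))) + (x - (1-x)/6) * (t2:ℝ)
          else ((y*2 + (1-y)*(55/24) - 7/6*(t1:ℝ))) + (y - (1-y)/6) * (t2:ℝ)) ∂μ01 := by
        unfold V1; exact integral_congr_ae (Filter.Eventually.of_forall key)
    _ = _ := by
        rw [integral_mu01_ite _ _ _ _ _ hc0 hc1]; ring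

lemma V2_strat (a : Act12) (t2 : T01) (c x y : ℝ) (hc0 : 0 ≤ c) (hc1 : c ≤ 1)
    (hx0 : 0 ≤ x) (hx1 : x ≤ 1) (hy0 : 0 ≤ y) (hy1 : y ≤ 1) :
    V2 a t2 (strat c x y)
      = (c*x+(1-c)*y) * u2 aTwo a + (1 - (c*x+(1-c)*y)) * u2 aOne a := by
  have key : ∀ t1 : T01, (∫ a1, u2 a1 a ∂(strat c x y t1))
      = (if (t1:ℝ) ≤ c then (x * u2 aTwo a + (1-x) * u2 aOne a) + 0 * (t1:ℝ)
          else (y * u2 aTwo a + (1-y) * u2 aOne a) + 0 * (t1:ℝ)) := by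
    intro t1
    unfold strat
    by_cases h : (t1:ℝ) ≤ c
    · rw [if_pos h, if_pos h, integral_mix x hx0 hx1]; ring
    · rw [if_neg h, if_neg h, integral_mix y hy0 hy1]; ring
  calc V2 a t2 (strat c x y)
      = ∫ t1 : T01, (if (t1:ℝ) ≤ c then (x * u2 aTwo a + (1-x) * u2 aOne a) + 0 * (t1:ℝ)
          else (y * u2 aTwo a + (1-y) * u2 aOne a) + 0 * (t1:ℝ)) ∂μ01 := by
        unfold V2; exact integral_congr_ae (Filter.Eventually.of_forall key)
    _ = _ := by
        rw [integral_mu01_ite _ _ _ _ _ hc0 hc1]; ring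

/-- Player 1's cutoff strategy is a best response to any player-2 cutoff strategy whose
aggregate statistics satisfy `173 A + 80 B = 31` and `A ≥ 1/8`. -/
lemma g1star_BR1 (c x y : ℝ) (hc0 : 0 ≤ c) (hc1 : c ≤ 1)
    (hx0 : 0 ≤ x) (hx1 : x ≤ 1) (hy0 : 0 ≤ y) (hy1 : y ≤ 1)
    (hAB : 173*(c*x+(1-c)*y) + 80*(x*c^2/2 + y*(1-c^2)/2) = 31)
    (hA : 1/8 ≤ c*x+(1-c)*y) (t1 : T01) :
    g1star t1 ∈ BR1 t1 (strat c x y) := by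
  have h1 := V1_one_strat t1 c x y hc0 hc1 hx0 hx1 hy0 hy1
  have h2 := V1_two_strat t1 c x y hc0 hc1 hx0 hx1 hy0 hy1
  have ht1 : (0:ℝ) ≤ (t1:ℝ) := t1.2.1
  have ht1' : (t1:ℝ) ≤ 1 := t1.2.2
  intro a'
  unfold g1star
  by_cases h : (t1:ℝ) ≤ 1/5
  · rw [if_pos h]
    rcases act_cases a' with rfl | rfl
    · show V1 aOne t1 (strat c x y) ≤ V1 aTwo t1 (strat c x y)
      rw [h1, h2]
      nlinarith [mul_nonneg (by linarith : (0:ℝ) ≤ c*x+(1-c)*y - 1/8)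
        (by linarith : (0:ℝ) ≤ 1/5 - (t1:ℝ))]
    · exact le_refl _
  · rw [if_neg h]
    push_neg at h
    rcases act_cases a' with rfl | rfl
    · exact le_refl _
    · show V1 aTwo t1 (strat c x y) ≤ V1 aOne t1 (strat c x y)
      rw [h1, h2]
      nlinarith [mul_nonneg (by linarith : (0:ℝ) ≤ c*x+(1-c)*y - 1/8)
        (by linarith : (0:ℝ) ≤ (t1:ℝ) - 1/5)]

/-- Any action of player 2 is a best response to a player-1 cutoff strategy with
aggregate probability 1/5 on action 2. -/
lemma BR2_all (c x y : ℝ) (hc0 : 0 ≤ c) (hc1 : c ≤ 1)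
    (hx0 : 0 ≤ x) (hx1 : x ≤ 1) (hy0 : 0 ≤ y) (hy1 : y ≤ 1)
    (hA : c*x+(1-c)*y = 1/5) (t2 : T01) (a : Act12) :
    a ∈ BR2 t2 (strat c x y) := by
  intro a'
  have := fun b => V2_strat b t2 c x y hc0 hc1 hx0 hx1 hy0 hy1
  rw [this a, this a', hA]
  rcases act_cases a with rfl | rfl <;> rcases act_cases a' with rfl | rfl <;>
    norm_num [u2, aOne, aTwo]

lemma rconst_quad : 40*rconst^2 + 173*rconst = 31 := by
  have hs : Real.sqrt 34889 * Real.sqrt 34889 = 34889 :=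
    Real.mul_self_sqrt (by norm_num)
  unfold rconst
  field_simp
  nlinarith [hs]

lemma rconst_ge : 1/8 ≤ rconst := by
  have hs : Real.sqrt 34889 * Real.sqrt 34889 = 34889 :=
    Real.mul_self_sqrt (by norm_num)
  have hnn : 0 ≤ Real.sqrt 34889 := Real.sqrt_nonneg _
  unfold rconst
  nlinarith [hs, hnn]

lemma rconst_le : rconst ≤ 1 := by
  have hs : Real.sqrt 34889 * Real.sqrt 34889 = 34889 :=
    Real.mul_self_sqrt (by norm_num)
  have hnn : 0 ≤ Real.sqrt 34889 := Real.sqrt_nonneg _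
  unfold rconst
  nlinarith [hs, hnn]

lemma rconst_nonneg : 0 ≤ rconst := le_trans (by norm_num) rconst_ge

lemma dirac_g2star : (fun t => Measure.dirac (g2star t)) = strat rconst 1 0 := by
  funext t
  unfold g2star strat
  by_cases h : (t:ℝ) ≤ rconst
  · rw [if_pos h, if_pos h, mix_one]; rfl
  · rw [if_neg h, if_neg h, mix_zero]; rfl

lemma dirac_g1star : (fun t => Measure.dirac (g1star t)) = strat (1/5) 1 0 := by
  funext t
  unfold g1star strat
  by_cases h : (t:ℝ) ≤ 1/5
  · rw [if_pos h, if_pos h, mix_one]; rfl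
  · rw [if_neg h, if_neg h, mix_zero]; rfl

end Aux

section Aux2
open scoped ENNReal

lemma prohorovDist_nonneg' {Ω : Type*} [MeasurableSpace Ω] [PseudoMetricSpace Ω]
    (μ ν : Measure Ω) (hμ : μ Set.univ = 1) : 0 ≤ prohorovDist μ ν := by
  apply Real.sInf_nonneg
  intro ε hε
  by_contra hneg
  push_neg at hneg
  have h := (hε Set.univ MeasurableSet.univ).1
  rw [Metric.thickening_of_nonpos hneg.le, hμ, measure_empty,
    ENNReal.ofReal_eq_zero.2 hneg.le, zero_add] at h
  exact one_ne_zero (le_antisymm h (zero_le))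

lemma prohorovDist_le' {Ω : Type*} [MeasurableSpace Ω] [PseudoMetricSpace Ω]
    (μ ν : Measure Ω) (hμ : μ Set.univ = 1) (δ : ℝ) (hδ : 0 < δ)
    (h : ∀ B : Set Ω, MeasurableSet B →
      μ B ≤ ν B + ENNReal.ofReal δ ∧ ν B ≤ μ B + ENNReal.ofReal δ) :
    prohorovDist μ ν ≤ δ := by
  apply csInf_le
  · refine ⟨0, fun ε hε => ?_⟩
    by_contra hneg
    push_neg at hneg
    have h2 := (hε Set.univ MeasurableSet.univ).1
    rw [Metric.thickening_of_nonpos hneg.le, hμ, measure_empty,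
      ENNReal.ofReal_eq_zero.2 hneg.le, zero_add] at h2
    exact one_ne_zero (le_antisymm h2 (zero_le))
  · intro B hB
    constructor
    · exact (h B hB).1.trans
        (add_le_add_left (measure_mono (Metric.self_subset_thickening hδ B)) _)
    · exact (h B hB).2.trans
        (add_le_add_left (measure_mono (Metric.self_subset_thickening hδ B)) _)

lemma dirac_le_one (a : Act12) (B : Set Act12) : Measure.dirac a B ≤ 1 := by
  exact prob_le_one

lemma mix_tv_dirac (p : ℝ) (hp0 : 0 ≤ p) (hp1 : p ≤ 1) (a : Act12) (γ : ℝ)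
    (hγ : (if a = aTwo then 1 - p else p) ≤ γ)
    (B : Set Act12) (hB : MeasurableSet B) :
    mix p B ≤ Measure.dirac a B + ENNReal.ofReal γ ∧
      Measure.dirac a B ≤ mix p B + ENNReal.ofReal γ := by
  rcases act_cases a with rfl | rfl
  · -- a = aOne, gap is p ≤ γ
    rw [if_neg aOne_ne_aTwo] at hγ
    constructor
    · rw [mix_apply]
      have h1 : ENNReal.ofReal p * Measure.dirac aTwo B ≤ ENNReal.ofReal γ :=
        le_trans (mul_le_mul' (ENNReal.ofReal_le_ofReal hγ) (dirac_le_one _ _))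
          (by rw [mul_one])
      have h2 : ENNReal.ofReal (1-p) * Measure.dirac aOne B ≤ Measure.dirac aOne B :=
        mul_le_of_le_one_left (zero_le) (ENNReal.ofReal_le_one.2 (by linarith))
      rw [add_comm ((Measure.dirac aOne) B) (ENNReal.ofReal γ)]
      exact add_le_add h1 h2
    · by_cases hmem : aOne ∈ B
      · have hd : Measure.dirac aOne B = 1 := by
          rw [Measure.dirac_apply' _ hB, Set.indicator_of_mem hmem]; rfl
        have hmix : ENNReal.ofReal (1-p) ≤ mix p B := by
          rw [mix_apply, Measure.dirac_apply' aOne hB, Set.indicator_of_mem hmem]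
          calc ENNReal.ofReal (1-p) = ENNReal.ofReal (1-p) * 1 := (mul_one _).symm
            _ ≤ _ := le_add_self
        rw [hd]
        calc (1:ℝ≥0∞) ≤ ENNReal.ofReal ((1-p) + γ) := by
              rw [← ENNReal.ofReal_one]
              exact ENNReal.ofReal_le_ofReal (by linarith)
          _ ≤ _ := by
              rw [ENNReal.ofReal_add (by linarith) (by linarith)]
              exact add_le_add_left hmix _
      · have hd : Measure.dirac aOne B = 0 := by
          rw [Measure.dirac_apply' _ hB, Set.indicator_of_notMem hmem]
        rw [hd]; exact zero_le
  · -- a = aTwo, gap is 1 - p ≤ γ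
    rw [if_pos rfl] at hγ
    constructor
    · rw [mix_apply]
      have h1 : ENNReal.ofReal (1-p) * Measure.dirac aOne B ≤ ENNReal.ofReal γ :=
        le_trans (mul_le_mul' (ENNReal.ofReal_le_ofReal hγ) (dirac_le_one _ _))
          (by rw [mul_one])
      have h2 : ENNReal.ofReal p * Measure.dirac aTwo B ≤ Measure.dirac aTwo B :=
        mul_le_of_le_one_left (zero_le) (ENNReal.ofReal_le_one.2 hp1)
      exact add_le_add h2 h1
    · by_cases hmem : aTwo ∈ B
      · have hd : Measure.dirac aTwo B = 1 := by
          rw [Measure.dirac_apply' _ hB, Set.indicator_of_mem hmem]; rfl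
        have hmix : ENNReal.ofReal p ≤ mix p B := by
          rw [mix_apply, Measure.dirac_apply' _ hB, Set.indicator_of_mem hmem]
          calc ENNReal.ofReal p = ENNReal.ofReal p * 1 := (mul_one _).symm
            _ ≤ _ := le_self_add
        rw [hd]
        calc (1:ℝ≥0∞) ≤ ENNReal.ofReal (p + γ) := by
              rw [← ENNReal.ofReal_one]
              exact ENNReal.ofReal_le_ofReal (by linarith)
          _ ≤ _ := by
              rw [ENNReal.ofReal_add hp0 (by linarith)]
              exact add_le_add_left hmix _
      · have hd : Measure.dirac aTwo B = 0 := by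
          rw [Measure.dirac_apply' _ hB, Set.indicator_of_notMem hmem]
        rw [hd]; exact zero_le

lemma prohorov_mix_dirac_le (p : ℝ) (hp0 : 0 ≤ p) (hp1 : p ≤ 1) (a : Act12) (γ : ℝ)
    (hγpos : 0 < γ) (hγ : (if a = aTwo then 1 - p else p) ≤ γ) :
    prohorovDist (mix p) (Measure.dirac a) ≤ γ := by
  have hprob := isProbabilityMeasure_mix p hp0 hp1
  exact prohorovDist_le' _ _ hprob.measure_univ γ hγpos
    (fun B hB => mix_tv_dirac p hp0 hp1 a γ hγ B hB)

lemma prohorov_strat_le (c x y : ℝ) (hx0 : 0 ≤ x) (hx1 : x ≤ 1) (hy0 : 0 ≤ y) (hy1 : y ≤ 1)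
    (γ : ℝ) (hγ : 0 < γ) (h1 : 1 - x ≤ γ) (h2 : y ≤ γ) (t : T01) (s : Act12)
    (hs : s = if (t:ℝ) ≤ c then aTwo else aOne) :
    prohorovDist (strat c x y t) (Measure.dirac s) ≤ γ := by
  rw [hs]
  unfold strat
  by_cases h : (t:ℝ) ≤ c
  · rw [if_pos h, if_pos h]
    exact prohorov_mix_dirac_le x hx0 hx1 aTwo γ hγ (by rw [if_pos rfl]; exact h1)
  · rw [if_neg h, if_neg h]
    exact prohorov_mix_dirac_le y hy0 hy1 aOne γ hγ (by rw [if_neg aOne_ne_aTwo]; exact h2)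

lemma measurable_strat_apply (c x y : ℝ) (B : Set Act12) :
    Measurable fun t : T01 => strat c x y t B := by
  unfold strat
  simp only [apply_ite (fun q : ℝ => mix q B)]
  exact Measurable.ite (measurable_subtype_coe measurableSet_Iic)
    measurable_const measurable_const

lemma isMixed_strat (c x y : ℝ) (hx0 : 0 ≤ x) (hx1 : x ≤ 1) (hy0 : 0 ≤ y) (hy1 : y ≤ 1) :
    IsMixed (strat c x y) := by
  constructor
  · intro t
    unfold strat
    by_cases h : (t:ℝ) ≤ c
    · rw [if_pos h]; exact isProbabilityMeasure_mix x hx0 hx1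
    · rw [if_neg h]; exact isProbabilityMeasure_mix y hy0 hy1
  · intro B _
    exact measurable_strat_apply c x y B

lemma mix_singleton_pos (p : ℝ) (hp0 : 0 < p) (hp1 : p < 1) (a : Act12) :
    0 < mix p {a} := by
  rcases act_cases a with rfl | rfl
  · calc (0:ℝ≥0∞) < ENNReal.ofReal (1-p) * Measure.dirac aOne {aOne} := by
          rw [Measure.dirac_apply' aOne (measurableSet_singleton _),
            Set.indicator_of_mem (Set.mem_singleton _)]
          simpa using ENNReal.ofReal_pos.2 (by linarith : (0:ℝ) < 1 - p)
      _ ≤ mix p {aOne} := by rw [mix_apply]; exact le_add_self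
  · calc (0:ℝ≥0∞) < ENNReal.ofReal p * Measure.dirac aTwo {aTwo} := by
          rw [Measure.dirac_apply' aTwo (measurableSet_singleton _),
            Set.indicator_of_mem (Set.mem_singleton _)]
          simpa using ENNReal.ofReal_pos.2 hp0
      _ ≤ mix p {aTwo} := by rw [mix_apply]; exact le_self_add

lemma isCompletelyMixed_strat (c x y : ℝ) (hx0 : 0 < x) (hx1 : x < 1)
    (hy0 : 0 < y) (hy1 : y < 1) : IsCompletelyMixed (strat c x y) := by
  intro t a
  unfold strat
  by_cases h : (t:ℝ) ≤ c
  · rw [if_pos h]; exact mix_singleton_pos x hx0 hx1 a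
  · rw [if_neg h]; exact mix_singleton_pos y hy0 hy1 a

end Aux2

/-- **Claim.**  The profile (g1star, g2star) is a perfect equilibrium of the example game. -/
theorem example1_perfect_equilibrium :
    IsBNE12 g1star g2star ∧ IsPerfect12 g1star g2star := by
  have hq := rconst_quad
  have hr8 := rconst_ge
  have hr1 := rconst_le
  have hr0 := rconst_nonneg
  have hBR1_dirac : ∀ t1, g1star t1 ∈ BR1 t1 (fun t => Measure.dirac (g2star t)) := by
    intro t1
    rw [dirac_g2star]
    exact g1star_BR1 rconst 1 0 hr0 hr1 (by norm_num) (by norm_num) (by norm_num)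
      (by norm_num) (by linear_combination hq) (by simpa using hr8) t1
  have hBR2_dirac : ∀ t2, g2star t2 ∈ BR2 t2 (fun t => Measure.dirac (g1star t)) := by
    intro t2
    rw [dirac_g1star]
    exact BR2_all (1/5) 1 0 (by norm_num) (by norm_num) (by norm_num) (by norm_num)
      (by norm_num) (by norm_num) (by norm_num) t2 _
  refine ⟨⟨Filter.Eventually.of_forall hBR1_dirac, Filter.Eventually.of_forall hBR2_dirac⟩, ?_⟩
  set eps : ℕ → ℝ := fun k => 1/(k+1) with heps
  have heps0 : ∀ k, 0 < eps k := fun k => by positivity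
  have heps1 : ∀ k, eps k ≤ 1 := by
    intro k
    rw [heps]
    have : (1:ℝ) ≤ (k:ℝ) + 1 := by
      have : (0:ℝ) ≤ (k:ℝ) := Nat.cast_nonneg k
      linarith
    simpa using div_le_one_of_le₀ this (by positivity)
  have hepslim : Filter.Tendsto eps Filter.atTop (nhds 0) :=
    tendsto_one_div_add_atTop_nhds_zero_nat
  -- bounds on the perturbed probabilities
  have hx1b : ∀ k, 0 < 1 - 4/5 * eps k ∧ 1 - 4/5 * eps k < 1 := fun k =>
    ⟨by linarith [heps1 k], by linarith [heps0 k]⟩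
  have hy1b : ∀ k, 0 < 1/5 * eps k ∧ 1/5 * eps k < 1 := fun k =>
    ⟨by linarith [heps0 k], by linarith [heps1 k]⟩
  have hx2b : ∀ k, 0 < 1 - 182/213 * eps k ∧ 1 - 182/213 * eps k < 1 := fun k =>
    ⟨by linarith [heps1 k], by linarith [heps0 k]⟩
  have hy2b : ∀ k, 0 < 31/213 * eps k ∧ 31/213 * eps k < 1 := fun k =>
    ⟨by linarith [heps0 k], by linarith [heps1 k]⟩
  refine ⟨fun k => strat (1/5) (1 - 4/5 * eps k) (1/5 * eps k),
    fun k => strat rconst (1 - 182/213 * eps k) (31/213 * eps k), ?_, ?_, ?_⟩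
  · intro k
    exact ⟨isMixed_strat _ _ _ (hx1b k).1.le (hx1b k).2.le (hy1b k).1.le (hy1b k).2.le,
      isMixed_strat _ _ _ (hx2b k).1.le (hx2b k).2.le (hy2b k).1.le (hy2b k).2.le,
      isCompletelyMixed_strat _ _ _ (hx1b k).1 (hx1b k).2 (hy1b k).1 (hy1b k).2,
      isCompletelyMixed_strat _ _ _ (hx2b k).1 (hx2b k).2 (hy2b k).1 (hy2b k).2⟩
  · refine Filter.Eventually.of_forall fun t1 => ⟨?_, ?_⟩
    · -- Prohorov convergence for player 1
      apply squeeze_zero (g := eps) (fun k => ?_) (fun k => ?_) hepslim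
      · exact prohorovDist_nonneg' _ _
          ((isMixed_strat _ _ _ (hx1b k).1.le (hx1b k).2.le (hy1b k).1.le
            (hy1b k).2.le).1 t1).measure_univ
      · exact prohorov_strat_le _ _ _ (hx1b k).1.le (hx1b k).2.le (hy1b k).1.le
          (hy1b k).2.le (eps k) (heps0 k) (by linarith [heps0 k, heps1 k]) (by linarith [heps0 k, heps1 k])
          t1 (g1star t1) rfl
    · -- best-response property of player 1 against the perturbed strategies
      have hmem : ∀ k, g1star t1 ∈ BR1 t1 (strat rconst (1 - 182/213 * eps k)
          (31/213 * eps k)) := by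
        intro k
        apply g1star_BR1 rconst _ _ hr0 hr1 (hx2b k).1.le (hx2b k).2.le
          (hy2b k).1.le (hy2b k).2.le
        · linear_combination (1 - eps k) * hq
        · nlinarith [mul_nonneg (by linarith [heps1 k] : (0:ℝ) ≤ 1 - eps k)
            (by linarith : (0:ℝ) ≤ rconst - 1/8), (heps0 k).le]
      have : (fun k => Metric.infDist (g1star t1) (BR1 t1 (strat rconst
          (1 - 182/213 * eps k) (31/213 * eps k)))) = fun _ => 0 :=
        funext fun k => Metric.infDist_zero_of_mem (hmem k)
      rw [this]
      exact tendsto_const_nhds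
  · refine Filter.Eventually.of_forall fun t2 => ⟨?_, ?_⟩
    · apply squeeze_zero (g := eps) (fun k => ?_) (fun k => ?_) hepslim
      · exact prohorovDist_nonneg' _ _
          ((isMixed_strat _ _ _ (hx2b k).1.le (hx2b k).2.le (hy2b k).1.le
            (hy2b k).2.le).1 t2).measure_univ
      · exact prohorov_strat_le _ _ _ (hx2b k).1.le (hx2b k).2.le (hy2b k).1.le
          (hy2b k).2.le (eps k) (heps0 k) (by linarith [heps0 k, heps1 k]) (by linarith [heps0 k, heps1 k])
          t2 (g2star t2) rfl
    · have hmem : ∀ k, g2star t2 ∈ BR2 t2 (strat (1/5) (1 - 4/5 * eps k)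
          (1/5 * eps k)) := by
        intro k
        exact BR2_all (1/5) _ _ (by norm_num) (by norm_num) (hx1b k).1.le (hx1b k).2.le
          (hy1b k).1.le (hy1b k).2.le (by ring) t2 _
      have : (fun k => Metric.infDist (g2star t2) (BR2 t2 (strat (1/5)
          (1 - 4/5 * eps k) (1/5 * eps k)))) = fun _ => 0 :=
        funext fun k => Metric.infDist_zero_of_mem (hmem k)
      rw [this]
      exact tendsto_const_nhds


end

end MonotonePerfection
end

section
/- The two-player binary-action example game does not possess a perfect monotone equilibrium: no strategy profile of this game is simultaneously a monotone equilibrium and perfect. -/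
/-!
Statement 15 (Claim 1, part 4): the two-player binary-action example game does not possess a
perfect monotone equilibrium: no strategy profile is simultaneously a monotone equilibrium and
perfect.
-/

open MeasureTheory Filter Metric

namespace MonotonePerfection

noncomputable section

/-! ### Auxiliary definitions and lemmas -/

def A1 : Act12 := ⟨1, Or.inl rfl⟩
def A2 : Act12 := ⟨2, Or.inr rfl⟩

lemma act_eq (a : Act12) : a = A1 ∨ a = A2 := by
  rcases a with ⟨a, h | h⟩
  · exact Or.inl (Subtype.ext h)
  · exact Or.inr (Subtype.ext h)

lemma A1_ne_A2 : A1 ≠ A2 := by simp [A1, A2]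

instance : Fintype Act12 :=
  ⟨⟨{⟨1, Or.inl rfl⟩, ⟨2, Or.inr rfl⟩}, by decide⟩, by
    rintro ⟨a, rfl | rfl⟩ <;> simp⟩

lemma univ_eq : (Finset.univ : Finset Act12) = {A1, A2} := by
  ext a
  simpa using act_eq a

instance : IsProbabilityMeasure μ01 := by
  constructor
  rw [μ01, MeasureTheory.Measure.comap_apply _ Subtype.val_injective
      (fun s hs => MeasurableSet.subtype_image measurableSet_Icc hs) _ MeasurableSet.univ,
      Set.image_univ, Subtype.range_val]
  simp [Real.volume_Icc]

lemma eq_of_dist_lt_one {x y : Act12} (h : dist x y < 1) : x = y := by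
  rcases act_eq x with rfl | rfl <;> rcases act_eq y with rfl | rfl <;> first
    | rfl
    | (exfalso; rw [Subtype.dist_eq] at h; norm_num [A1, A2, Nat.dist_eq] at h)

lemma integral_act (g : Measure Act12) [IsProbabilityMeasure g] (f : Act12 → ℝ) :
    ∫ a, f a ∂g = (g {A1}).toReal * f A1 + (g {A2}).toReal * f A2 := by
  rw [integral_fintype (f := f) (Integrable.of_finite), univ_eq, Finset.sum_pair A1_ne_A2]
  simp [smul_eq_mul, Measure.real]

lemma meas_A2_toReal (g : Measure Act12) [IsProbabilityMeasure g] :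
    (g {A2}).toReal = 1 - (g {A1}).toReal := by
  have hu : ({A1} : Set Act12) ∪ {A2} = Set.univ := by
    ext a; simpa [or_comm] using act_eq a
  have hd : Disjoint ({A1} : Set Act12) {A2} := by
    simp [Set.disjoint_singleton, A1_ne_A2]
  have h1 : g {A1} ≠ ⊤ := measure_ne_top g _
  have h2 : g {A2} ≠ ⊤ := measure_ne_top g _
  have key : g {A1} + g {A2} = 1 := by
    rw [← measure_union hd (measurableSet_singleton A2), hu, measure_univ]
  have key2 := congrArg ENNReal.toReal key
  rw [ENNReal.toReal_add h1 h2, ENNReal.toReal_one] at key2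
  linarith

lemma integrable_bdd {f : T01 → ℝ} (hf : Measurable f) (C : ℝ) (h : ∀ t, |f t| ≤ C) :
    Integrable f μ01 :=
  (integrable_const C).mono' hf.aestronglyMeasurable (ae_of_all _ (by simpa using h))

lemma Iv : ∫ t : T01, (t : ℝ) ∂μ01 = 1/2 := by
  rw [μ01, integral_subtype_comap measurableSet_Icc (fun x => x),
    MeasureTheory.integral_Icc_eq_integral_Ioc, ← intervalIntegral.integral_of_le zero_le_one]
  simp

lemma integral_canon (q : T01 → ℝ) (hqm : Measurable q) (hq1 : ∀ t, |q t| ≤ 1) (c d e f : ℝ) :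
    ∫ t : T01, (c + d * (t:ℝ) + e * q t + f * (q t * (t:ℝ))) ∂μ01
      = c + d/2 + e * (∫ t : T01, q t ∂μ01) + f * (∫ t : T01, q t * (t:ℝ) ∂μ01) := by
  have hco : Measurable (fun t : T01 => (t:ℝ)) := measurable_subtype_coe
  have hb : ∀ t : T01, |(t:ℝ)| ≤ 1 := by
    rintro ⟨t, h0, h1⟩; rw [abs_le]; constructor <;> simp <;> linarith
  have I0 : Integrable (fun t : T01 => d * (t:ℝ)) μ01 := by
    refine integrable_bdd (hco.const_mul d) |d| fun t => ?_
    rw [abs_mul]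
    calc |d| * |(t:ℝ)| ≤ |d| * 1 := mul_le_mul_of_nonneg_left (hb t) (abs_nonneg d)
      _ = |d| := mul_one _
  have I1 : Integrable (fun t : T01 => c + d * (t:ℝ)) μ01 := (integrable_const c).add I0
  have Iq : Integrable q μ01 := integrable_bdd hqm 1 hq1
  have I2 : Integrable (fun t : T01 => e * q t) μ01 := Iq.const_mul e
  have Iqt : Integrable (fun t : T01 => q t * (t:ℝ)) μ01 := by
    refine integrable_bdd (hqm.mul hco) 1 fun t => ?_
    rw [abs_mul]
    calc |q t| * |(t:ℝ)| ≤ 1 * 1 :=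
          mul_le_mul (hq1 t) (hb t) (abs_nonneg _) zero_le_one
      _ = 1 := by ring
  have I3 : Integrable (fun t : T01 => f * (q t * (t:ℝ))) μ01 := Iqt.const_mul f
  have I12 : Integrable (fun t : T01 => c + d * (t:ℝ) + e * q t) μ01 := I1.add I2
  rw [integral_add I12 I3, integral_add I1 I2, integral_add (integrable_const c) I0,
    integral_const, integral_const_mul, integral_const_mul, integral_const_mul, Iv]
  simp
  ring

lemma integral_affine (c d : ℝ) :
    ∫ t : T01, (c + d * (t:ℝ)) ∂μ01 = c + d/2 := by
  have := integral_canon (fun _ => 0) measurable_const (by norm_num) c d 0 0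
  simpa using this

lemma V1_eq (a : Act12) (t1 : T01) (g2 : T01 → Measure Act12)
    (hp : ∀ t, IsProbabilityMeasure (g2 t)) :
    V1 a t1 g2 = ∫ t2 : T01,
      ((g2 t2 {A1}).toReal * u1 a A1 (t1:ℝ) (t2:ℝ)
        + (1 - (g2 t2 {A1}).toReal) * u1 a A2 (t1:ℝ) (t2:ℝ)) ∂μ01 := by
  unfold V1
  refine integral_congr_ae (ae_of_all _ fun t2 => ?_)
  haveI := hp t2
  have h := integral_act (g2 t2) (fun a2 => u1 a a2 (t1:ℝ) (t2:ℝ))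
  rw [meas_A2_toReal] at h
  simpa using h

lemma BR1_nonempty (t : T01) (g : T01 → Measure Act12) : (BR1 t g).Nonempty := by
  rcases le_total (V1 A1 t g) (V1 A2 t g) with h | h
  · exact ⟨A2, fun a' => by rcases act_eq a' with rfl | rfl <;> simp [h]⟩
  · exact ⟨A1, fun a' => by rcases act_eq a' with rfl | rfl <;> simp [h]⟩

lemma BR2_nonempty (t : T01) (g : T01 → Measure Act12) : (BR2 t g).Nonempty := by
  rcases le_total (V2 A1 t g) (V2 A2 t g) with h | h
  · exact ⟨A2, fun a' => by rcases act_eq a' with rfl | rfl <;> simp [h]⟩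
  · exact ⟨A1, fun a' => by rcases act_eq a' with rfl | rfl <;> simp [h]⟩


lemma mu_le_half : μ01 {s : T01 | (s:ℝ) ≤ 1/2} = ENNReal.ofReal (1/2) := by
  have hms : MeasurableSet ((fun s : T01 => (s:ℝ)) ⁻¹' Set.Iic (1/2)) :=
    measurable_subtype_coe measurableSet_Iic
  have h : {s : T01 | (s:ℝ) ≤ 1/2} = (Subtype.val) ⁻¹' Set.Iic (1/2) := rfl
  rw [h, μ01, MeasureTheory.Measure.comap_apply _ Subtype.val_injective
      (fun s hs => MeasurableSet.subtype_image measurableSet_Icc hs) _ hms,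
    Subtype.image_preimage_coe]
  have : Set.Icc (0:ℝ) 1 ∩ Set.Iic (1/2) = Set.Icc 0 (1/2) := by
    ext x
    simp only [Set.mem_inter_iff, Set.mem_Icc, Set.mem_Iic]
    constructor
    · rintro ⟨⟨u1, u2⟩, u3⟩; exact ⟨u1, u3⟩
    · rintro ⟨u1, u3⟩; exact ⟨⟨u1, by linarith⟩, u3⟩
  rw [this, Real.volume_Icc]
  norm_num

lemma rearrange (q : T01 → ℝ) (hqm : Measurable q) (hq0 : ∀ s, 0 < q s)
    (hq1 : ∀ s, q s < 1)
    (hQ78 : 7/8 ≤ ∫ s : T01, q s ∂μ01) (hQle1 : (∫ s : T01, q s ∂μ01) ≤ 1) :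
    (∫ s : T01, q s ∂μ01) * (∫ s : T01, q s ∂μ01) / 2 < ∫ s : T01, q s * (s:ℝ) ∂μ01 := by
  have hqb : ∀ s, |q s| ≤ 1 := fun s => by
    rw [abs_le]; exact ⟨by linarith [hq0 s], (hq1 s).le⟩
  have Iq : Integrable q μ01 := integrable_bdd hqm 1 hqb
  set Q := ∫ s : T01, q s ∂μ01 with hQdef
  set R := ∫ s : T01, q s * (s:ℝ) ∂μ01 with hRdef
  clear_value Q R
  have hQ0 : (0:ℝ) ≤ Q := by linarith
  set h : T01 → ℝ := fun s => (q s - if (s:ℝ) ≤ Q then 1 else 0) * ((s:ℝ) - Q) with hhdef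
  clear_value h
  have hmble : Measurable h := by
    rw [hhdef]
    apply Measurable.mul
    · exact hqm.sub (Measurable.ite (measurableSet_le measurable_subtype_coe measurable_const)
        measurable_const measurable_const)
    · exact measurable_subtype_coe.sub measurable_const
  have hnn : ∀ s, 0 ≤ h s := by
    intro s
    rw [hhdef]
    by_cases hc : (s:ℝ) ≤ Q
    · simp only [hc, if_true]
      nlinarith [hq1 s]
    · push_neg at hc
      simp only [not_le.mpr hc, if_false]
      nlinarith [hq0 s]
  have hbd : ∀ s, |h s| ≤ 4 := by
    intro s
    have f1 : |q s - (if (s:ℝ) ≤ Q then 1 else 0)| ≤ 2 := by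
      have := hq0 s; have := hq1 s
      split <;> (rw [abs_le]; constructor <;> linarith)
    have f2 : |(s:ℝ) - Q| ≤ 2 := by
      have h0 : (0:ℝ) ≤ (s:ℝ) := s.2.1
      have h1v : (s:ℝ) ≤ 1 := s.2.2
      rw [abs_le]; constructor <;> linarith
    calc |h s| = |q s - (if (s:ℝ) ≤ Q then 1 else 0)| * |(s:ℝ) - Q| := by
          rw [hhdef]; exact abs_mul _ _
      _ ≤ 2 * 2 := mul_le_mul f1 f2 (abs_nonneg _) (by norm_num)
      _ = 4 := by norm_num
  have hI : Integrable h μ01 := integrable_bdd hmble 4 hbd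
  have hpos : 0 < ∫ s : T01, h s ∂μ01 := by
    rw [integral_pos_iff_support_of_nonneg (by intro s; exact hnn s) hI]
    have hsub : {s : T01 | (s:ℝ) ≤ 1/2} ⊆ Function.support h := by
      intro s hs
      have hsQ : (s:ℝ) < Q := lt_of_le_of_lt hs (by linarith)
      have hpos' : 0 < h s := by
        rw [hhdef]
        simp only [hsQ.le, if_true]
        nlinarith [hq1 s]
      exact fun h0 => hpos'.ne' h0
    calc (0:ENNReal) < ENNReal.ofReal (1/2) := by norm_num
      _ = μ01 {s : T01 | (s:ℝ) ≤ 1/2} := mu_le_half.symm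
      _ ≤ μ01 (Function.support h) := measure_mono hsub
  have hIi : ∫ s : T01, ((if (s:ℝ) ≤ Q then (1:ℝ) else 0) * ((s:ℝ) - Q)) ∂μ01
      = -(Q*Q/2) := by
    have step1 : ∫ s : T01, ((if (s:ℝ) ≤ Q then (1:ℝ) else 0) * ((s:ℝ) - Q)) ∂μ01
        = ∫ x in Set.Icc (0:ℝ) 1, ((if x ≤ Q then (1:ℝ) else 0) * (x - Q)) := by
      rw [μ01]
      exact integral_subtype_comap measurableSet_Icc
        (fun x => (if x ≤ Q then (1:ℝ) else 0) * (x - Q))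
    have step2 : ∀ x : ℝ, ((if x ≤ Q then (1:ℝ) else 0) * (x - Q))
        = Set.indicator (Set.Iic Q) (fun y => y - Q) x := by
      intro x
      rw [Set.indicator_apply]
      simp only [Set.mem_Iic]
      split <;> simp
    have step3 : Set.Iic Q ∩ Set.Icc (0:ℝ) 1 = Set.Icc 0 Q := by
      ext x
      simp only [Set.mem_inter_iff, Set.mem_Iic, Set.mem_Icc]
      constructor
      · rintro ⟨h1', h2', h3'⟩; exact ⟨h2', h1'⟩
      · rintro ⟨h1', h2'⟩; exact ⟨h2', h1', by linarith⟩
    rw [step1]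
    rw [integral_congr_ae (ae_of_all _ fun x => step2 x)]
    rw [MeasureTheory.integral_indicator measurableSet_Iic,
      MeasureTheory.Measure.restrict_restrict measurableSet_Iic, step3,
      MeasureTheory.integral_Icc_eq_integral_Ioc,
      ← intervalIntegral.integral_of_le hQ0,
      intervalIntegral.integral_sub intervalIntegral.intervalIntegrable_id
        intervalIntegrable_const]
    simp [smul_eq_mul]
    ring
  have hiii : Integrable (fun s : T01 => (if (s:ℝ) ≤ Q then (1:ℝ) else 0) * ((s:ℝ) - Q)) μ01 := by
    refine integrable_bdd ?_ 2 ?_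
    · exact (Measurable.ite (measurableSet_le measurable_subtype_coe measurable_const)
        measurable_const measurable_const).mul (measurable_subtype_coe.sub measurable_const)
    · intro s
      have h0 : (0:ℝ) ≤ (s:ℝ) := s.2.1
      have h1v : (s:ℝ) ≤ 1 := s.2.2
      rw [abs_mul]
      have f1 : |if (s:ℝ) ≤ Q then (1:ℝ) else 0| ≤ 1 := by split <;> simp
      have f2 : |(s:ℝ) - Q| ≤ 2 := by rw [abs_le]; constructor <;> linarith
      calc |if (s:ℝ) ≤ Q then (1:ℝ) else 0| * |(s:ℝ) - Q| ≤ 1 * 2 :=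
            mul_le_mul f1 f2 (abs_nonneg _) (by norm_num)
        _ = 2 := by norm_num
  have Iqt : Integrable (fun s : T01 => q s * (s:ℝ)) μ01 := by
    refine integrable_bdd (hqm.mul measurable_subtype_coe) 1 fun s => ?_
    have h0 : (0:ℝ) ≤ (s:ℝ) := s.2.1
    have h1v : (s:ℝ) ≤ 1 := s.2.2
    rw [abs_mul]
    calc |q s| * |(s:ℝ)| ≤ 1 * 1 := by
          refine mul_le_mul (hqb _) ?_ (abs_nonneg _) zero_le_one
          rw [abs_le]; constructor <;> linarith
      _ = 1 := by norm_num
  have hdecomp : ∀ s : T01, h s = q s * (s:ℝ) + (-Q) * q s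
      + (-1) * ((if (s:ℝ) ≤ Q then (1:ℝ) else 0) * ((s:ℝ) - Q)) := by
    intro s
    rw [hhdef]
    by_cases hc : (s:ℝ) ≤ Q <;> simp only [hc, if_true, if_false] <;> ring
  have hexp : ∫ s : T01, h s ∂μ01 = R - Q*Q + Q*Q/2 := by
    rw [integral_congr_ae (ae_of_all _ hdecomp)]
    have J1 : Integrable (fun s : T01 => q s * (s:ℝ) + (-Q) * q s) μ01 :=
      Iqt.add (Iq.const_mul (-Q))
    rw [integral_add J1 (hiii.const_mul (-1)), integral_add Iqt (Iq.const_mul (-Q)),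
      integral_const_mul, integral_const_mul, hIi, ← hQdef, ← hRdef]
    ring
  rw [hexp] at hpos
  linarith

lemma key_lemma (g2 : T01 → Measure Act12) (hmix : IsMixed g2) (hcm : IsCompletelyMixed g2)
    {t t' : T01} (htt' : (t:ℝ) < (t':ℝ))
    (h1 : V1 A2 t g2 ≤ V1 A1 t g2) (h2 : V1 A1 t' g2 ≤ V1 A2 t' g2) : False := by
  have hp : ∀ s, IsProbabilityMeasure (g2 s) := hmix.1
  set q : T01 → ℝ := fun s => (g2 s {A1}).toReal with hqdef
  have hqm : Measurable q := (hmix.2 {A1} (measurableSet_singleton _)).ennreal_toReal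
  have hq0 : ∀ s, 0 < q s := fun s => ENNReal.toReal_pos (hcm s A1).ne' (measure_ne_top _ _)
  have hq1 : ∀ s, q s < 1 := by
    intro s
    haveI := hp s
    have h2' : (0:ℝ) < (g2 s {A2}).toReal :=
      ENNReal.toReal_pos (hcm s A2).ne' (measure_ne_top _ _)
    have h3' := meas_A2_toReal (g2 s)
    simp only [hqdef]
    linarith
  have hqb : ∀ s, |q s| ≤ 1 := fun s => by
    rw [abs_le]; exact ⟨by linarith [hq0 s], (hq1 s).le⟩
  clear_value q
  have Iq : Integrable q μ01 := integrable_bdd hqm 1 hqb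
  set Q := ∫ s : T01, q s ∂μ01 with hQdef
  set R := ∫ s : T01, q s * (s:ℝ) ∂μ01 with hRdef
  clear_value Q R
  have hV : ∀ x : T01, V1 A1 x g2 - V1 A2 x g2
      = -7/4 + 7/6 * (x:ℝ) + (41/24 - 4/3 * (x:ℝ)) * Q + 2/3 * R := by
    intro x
    have e1 : V1 A1 x g2
        = ∫ s : T01, ((1/2 : ℝ) + (1/2) * (s:ℝ) + (2 - 4/3 * (x:ℝ)) * q s
            + (-(1/2)) * (q s * (s:ℝ))) ∂μ01 := by
      rw [V1_eq A1 x g2 hp]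
      refine integral_congr_ae (ae_of_all _ fun s => ?_)
      rw [hqdef]
      simp only [u1, A1, A2]
      norm_num
      ring
    have e2 : V1 A2 x g2
        = ∫ s : T01, ((2 - 7/6 * (x:ℝ)) + (1:ℝ) * (s:ℝ) + (7/24) * q s
            + (-(7/6)) * (q s * (s:ℝ))) ∂μ01 := by
      rw [V1_eq A2 x g2 hp]
      refine integral_congr_ae (ae_of_all _ fun s => ?_)
      rw [hqdef]
      simp only [u1, A1, A2]
      norm_num
      ring
    rw [e1, e2, integral_canon q hqm hqb, integral_canon q hqm hqb, ← hQdef, ← hRdef]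
    ring
  have hDt : 0 ≤ -7/4 + 7/6*(t:ℝ) + (41/24 - 4/3*(t:ℝ))*Q + 2/3*R := by
    have := hV t; linarith
  have hDt' : -7/4 + 7/6*(t':ℝ) + (41/24 - 4/3*(t':ℝ))*Q + 2/3*R ≤ 0 := by
    have := hV t'; linarith
  have hQ78 : 7/8 ≤ Q := by
    by_contra hcon
    push_neg at hcon
    nlinarith [mul_pos (sub_pos.2 htt') (by linarith : (0:ℝ) < 7/6 - 4/3*Q)]
  have hQle1 : Q ≤ 1 := by
    rw [hQdef]
    have := integral_mono Iq (integrable_const 1) (fun s => (hq1 s).le)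
    simpa using this
  have hR : Q*Q/2 < R := by
    rw [hQdef, hRdef]
    exact rearrange q hqm hq0 hq1 (hQdef ▸ hQ78) (hQdef ▸ hQle1)
  have hb1 : (t':ℝ) ≤ 1 := t'.2.2
  have hprod : 0 ≤ (Q - 7/8) * (Q - 4*(t':ℝ) + 6) :=
    mul_nonneg (by linarith) (by linarith)
  nlinarith [hDt', hR, hprod]


lemma V2_dirac (s1 : T01 → Act12) (a : Act12) (t2 : T01) :
    V2 a t2 (fun t => Measure.dirac (s1 t)) = ∫ t1 : T01, u2 (s1 t1) a ∂μ01 := by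
  unfold V2
  refine integral_congr_ae (ae_of_all _ fun t1 => ?_)
  exact MeasureTheory.integral_dirac (fun a1 => u2 a1 a) (s1 t1)

lemma V1_dirac (s2 : T01 → Act12) (a : Act12) (t1 : T01) :
    V1 a t1 (fun t => Measure.dirac (s2 t))
      = ∫ t2 : T01, u1 a (s2 t2) (t1:ℝ) (t2:ℝ) ∂μ01 := by
  unfold V1
  refine integral_congr_ae (ae_of_all _ fun t2 => ?_)
  exact MeasureTheory.integral_dirac (fun a2 => u1 a a2 (t1:ℝ) (t2:ℝ)) (s2 t2)

lemma ae_false_absurd (h : ∀ᵐ t ∂μ01, False) : False := by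
  rw [ae_iff] at h
  simp at h

lemma const_case_A2 (s1 s2 : T01 → Act12) (hB : IsBNE12 s1 s2)
    (h : ∀ᵐ t ∂μ01, s1 t = A2) : False := by
  have hs2 : ∀ᵐ t2 ∂μ01, s2 t2 = A1 := by
    filter_upwards [hB.2] with t2 hbr
    rcases act_eq (s2 t2) with he | he
    · exact he
    · exfalso
      have hv := hbr A1
      rw [he] at hv
      have c1 : V2 A1 t2 (fun t => Measure.dirac (s1 t)) = 7 := by
        rw [V2_dirac,
          integral_congr_ae (g := fun _ : T01 => (7:ℝ))
            (by filter_upwards [h] with t ht; rw [ht]; norm_num [u2, A1, A2])]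
        simp
      have c2 : V2 A2 t2 (fun t => Measure.dirac (s1 t)) = -1 := by
        rw [V2_dirac,
          integral_congr_ae (g := fun _ : T01 => (-1:ℝ))
            (by filter_upwards [h] with t ht; rw [ht]; norm_num [u2, A1, A2])]
        simp
      rw [c1, c2] at hv
      norm_num at hv
  have hs1 : ∀ᵐ t1 ∂μ01, s1 t1 = A1 := by
    filter_upwards [hB.1] with t1 hbr
    rcases act_eq (s1 t1) with he | he
    · exact he
    · exfalso
      have hv := hbr A1
      rw [he] at hv
      have c1 : V1 A1 t1 (fun t => Measure.dirac (s2 t)) = 5/2 - 4/3*(t1:ℝ) := by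
        rw [V1_dirac,
          integral_congr_ae (g := fun _ : T01 => (5/2 - 4/3*(t1:ℝ)))
            (by filter_upwards [hs2] with t ht; rw [ht]; norm_num [u1, A1, A2])]
        simp
      have c2 : V1 A2 t1 (fun t => Measure.dirac (s2 t))
          = (55/24 - 7/6*(t1:ℝ)) + (-(1/6))/2 := by
        rw [V1_dirac,
          integral_congr_ae (g := fun t : T01 => (55/24 - 7/6*(t1:ℝ)) + (-(1/6))*(t:ℝ))
            (by filter_upwards [hs2] with t ht; rw [ht]; norm_num [u1, A1, A2]; ring),
          integral_affine]
      rw [c1, c2] at hv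
      have hb : (t1:ℝ) ≤ 1 := t1.2.2
      linarith
  apply ae_false_absurd
  filter_upwards [h, hs1] with t h1 h2
  exact A1_ne_A2 (h2.symm.trans h1)

lemma const_case_A1 (s1 s2 : T01 → Act12) (hB : IsBNE12 s1 s2)
    (h : ∀ᵐ t ∂μ01, s1 t = A1) : False := by
  have hs2 : ∀ᵐ t2 ∂μ01, s2 t2 = A2 := by
    filter_upwards [hB.2] with t2 hbr
    rcases act_eq (s2 t2) with he | he
    · exfalso
      have hv := hbr A2
      rw [he] at hv
      have c1 : V2 A2 t2 (fun t => Measure.dirac (s1 t)) = 1 := by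
        rw [V2_dirac,
          integral_congr_ae (g := fun _ : T01 => (1:ℝ))
            (by filter_upwards [h] with t ht; rw [ht]; norm_num [u2, A1, A2])]
        simp
      have c2 : V2 A1 t2 (fun t => Measure.dirac (s1 t)) = -1 := by
        rw [V2_dirac,
          integral_congr_ae (g := fun _ : T01 => (-1:ℝ))
            (by filter_upwards [h] with t ht; rw [ht]; norm_num [u2, A1, A2])]
        simp
      rw [c1, c2] at hv
      norm_num at hv
    · exact he
  have hs1 : ∀ᵐ t1 ∂μ01, s1 t1 = A2 := by
    filter_upwards [hB.1] with t1 hbr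
    rcases act_eq (s1 t1) with he | he
    · exfalso
      have hv := hbr A2
      rw [he] at hv
      have c1 : V1 A1 t1 (fun t => Measure.dirac (s2 t)) = (1/2 : ℝ) + (1/2)/2 := by
        rw [V1_dirac,
          integral_congr_ae (g := fun t : T01 => (1/2 : ℝ) + (1/2)*(t:ℝ))
            (by filter_upwards [hs2] with t ht; rw [ht]; norm_num [u1, A1, A2]),
          integral_affine]
      have c2 : V1 A2 t1 (fun t => Measure.dirac (s2 t))
          = (2 - 7/6*(t1:ℝ)) + 1/2 := by
        rw [V1_dirac,
          integral_congr_ae (g := fun t : T01 => (2 - 7/6*(t1:ℝ)) + 1*(t:ℝ))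
            (by filter_upwards [hs2] with t ht; rw [ht]; norm_num [u1, A1, A2]; ring),
          integral_affine]
      rw [c1, c2] at hv
      have hb : (t1:ℝ) ≤ 1 := t1.2.2
      linarith
    · exact he
  apply ae_false_absurd
  filter_upwards [h, hs1] with t h1 h2
  exact A1_ne_A2 (h1.symm.trans h2)

/-- **Claim.**  The example game has no perfect monotone equilibrium. -/
theorem example1_no_perfect_monotone_equilibrium :
    ¬ ∃ s1 s2 : T01 → Act12,
        Measurable s1 ∧ Measurable s2 ∧ Monotone s1 ∧ Monotone s2 ∧
        IsBNE12 s1 s2 ∧ IsPerfect12 s1 s2 := by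
  rintro ⟨s1, s2, hms1, hms2, hmono1, hmono2, hBNE, hPerf⟩
  obtain ⟨G1, G2, hG, hp1, hp2⟩ := hPerf
  have hF1 : ∃ᵐ t ∂μ01, s1 t = A1 :=
    (Filter.not_eventually.mp fun h => const_case_A2 s1 s2 hBNE h).mono
      fun t ht => (act_eq (s1 t)).resolve_right ht
  have hF2 : ∃ᵐ t ∂μ01, s1 t = A2 :=
    (Filter.not_eventually.mp fun h => const_case_A1 s1 s2 hBNE h).mono
      fun t ht => (act_eq (s1 t)).resolve_left ht
  obtain ⟨t, ht, -, htd⟩ := (hF1.and_eventually hp1).exists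
  obtain ⟨t', ht', -, htd'⟩ := (hF2.and_eventually hp1).exists
  have htlt : (t:ℝ) < (t':ℝ) := by
    have hnle : ¬ (t' ≤ t) := by
      intro hle
      have := hmono1 hle
      rw [ht, ht'] at this
      have h12 : (2:ℕ) ≤ 1 := this
      omega
    exact Subtype.coe_lt_coe.mpr (not_le.mp hnle)
  have hev : ∀ᶠ k in atTop, s1 t ∈ BR1 t (G2 k) := by
    filter_upwards [htd.eventually_lt_const (by norm_num : (0:ℝ) < 1)] with k hk
    obtain ⟨y, hy, hxy⟩ := (Metric.infDist_lt_iff (BR1_nonempty t (G2 k))).mp hk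
    exact (eq_of_dist_lt_one hxy) ▸ hy
  have hev' : ∀ᶠ k in atTop, s1 t' ∈ BR1 t' (G2 k) := by
    filter_upwards [htd'.eventually_lt_const (by norm_num : (0:ℝ) < 1)] with k hk
    obtain ⟨y, hy, hxy⟩ := (Metric.infDist_lt_iff (BR1_nonempty t' (G2 k))).mp hk
    exact (eq_of_dist_lt_one hxy) ▸ hy
  obtain ⟨k, hk, hk'⟩ := (hev.and hev').exists
  rw [ht] at hk
  rw [ht'] at hk'
  exact key_lemma (G2 k) (hG k).2.1 (hG k).2.2.2 htlt (hk A2) (hk' A1)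

end

end MonotonePerfection
end
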